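/- arXiv:1312.3582 — 2 statements merged into one kernel-verified Lean document; each statement's English description precedes it below -/
import Mathlib

section
/- Suppose A ∈ C^{m×N} satisfies ‖Ax‖₂ ≤ √(1+δ) ‖x‖₂ for all s-sparse x. Then for every x ∈ C^N, ‖Ax‖₂ ≤ √(1+δ) (‖x‖₂ + ‖x‖₁/√s). -/
open Finset

/-- ℓ2 norm of a finitely-indexed complex vector. -/
noncomputable def l2 {n : ℕ} (x : Fin n → ℂ) : ℝ := Real.sqrt (∑ j, ‖x j‖ ^ 2)

/-- ℓ1 norm. -/
noncomputable def l1 {n : ℕ} (x : Fin n → ℂ) : ℝ := ∑ j, ‖x j‖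

/-- Support of a vector as a finset. -/
noncomputable def spt {n : ℕ} (x : Fin n → ℂ) : Finset (Fin n) := Finset.univ.filter (fun j => x j ≠ 0)

/-- Weighted ℓ0 "norm" ‖x‖_{ω,0} = ∑_{j : x_j ≠ 0} ω_j². -/
noncomputable def wnorm0 {n : ℕ} (ω : Fin n → ℝ) (x : Fin n → ℂ) : ℝ :=
  ∑ j ∈ spt x, (ω j) ^ 2

/-- Weighted ℓ1 norm ‖x‖_{ω,1} = ∑_j |x_j| ω_j. -/
noncomputable def wl1 {n : ℕ} (ω : Fin n → ℝ) (x : Fin n → ℂ) : ℝ := ∑ j, ‖x j‖ * ω j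

/-- Weighted cardinality of an index set. -/
noncomputable def wcard {n : ℕ} (ω : Fin n → ℝ) (S : Finset (Fin n)) : ℝ := ∑ j ∈ S, (ω j) ^ 2

/-- Restriction of a vector to an index set (zeroing the other coordinates). -/
def restr {n : ℕ} (S : Finset (Fin n)) (x : Fin n → ℂ) : Fin n → ℂ :=
  fun j => if j ∈ S then x j else 0

/-!
Split `x` into blocks: its `s` largest entries, the next `s` largest, and so on. Every entry of
a later block is at most the average modulus on the previous block, so the ℓ2 norm of each block
after the first is at most the ℓ1 norm of its predecessor divided by `√s`; summing the sparse
bound over the blocks gives the claim. The induction removes one block at a time and carries a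
bound `B` on the ℓ2 norm of every `s`-sparse restriction of what remains: `‖x‖₂` at the start,
`‖x_S‖₁ / √s` once the block `S` has been removed.
-/

lemma l2_eq_norm_toLp {n : ℕ} (x : Fin n → ℂ) : l2 x = ‖WithLp.toLp 2 x‖ := by
  rw [EuclideanSpace.norm_eq]; rfl

lemma l1_nonneg {n : ℕ} (x : Fin n → ℂ) : 0 ≤ l1 x :=
  sum_nonneg fun _ _ => norm_nonneg _

section restr

variable {n : ℕ} (S : Finset (Fin n)) (x : Fin n → ℂ)

lemma restr_add_restr_compl : restr S x + restr Sᶜ x = x := by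
  funext j; by_cases h : j ∈ S <;> simp [restr, h]

lemma restr_spt : restr (spt x) x = x := by
  funext j; by_cases h : x j = 0 <;> simp [restr, spt, h]

lemma spt_restr : spt (restr S x) = spt x ∩ S := by
  ext j; by_cases h : j ∈ S <;> simp [restr, spt, h]

lemma l1_restr : l1 (restr S x) = ∑ j ∈ S, ‖x j‖ := by
  simp [l1, restr, apply_ite (norm : ℂ → ℝ), sum_ite_mem]

lemma l1_restr_add_l1_restr_compl : l1 (restr S x) + l1 (restr Sᶜ x) = l1 x := by
  rw [l1_restr, l1_restr, sum_add_sum_compl, l1]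

lemma l2_restr_le : l2 (restr S x) ≤ l2 x := by
  refine Real.sqrt_le_sqrt (sum_le_sum fun j _ => ?_)
  by_cases h : j ∈ S <;> simp [restr, h]

lemma l2_restr_le_sqrt_card_mul {M : ℝ} (hM₀ : 0 ≤ M) (hM : ∀ j ∈ S, ‖x j‖ ≤ M) :
    l2 (restr S x) ≤ Real.sqrt S.card * M := by
  have hsum : ∑ j, ‖restr S x j‖ ^ 2 ≤ S.card * M ^ 2 := calc
    ∑ j, ‖restr S x j‖ ^ 2 = ∑ j ∈ S, ‖x j‖ ^ 2 := by
      simp [restr, apply_ite (norm : ℂ → ℝ), sum_ite_mem]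
    _ ≤ ∑ _j ∈ S, M ^ 2 := sum_le_sum fun j hj =>
      pow_le_pow_left₀ (norm_nonneg _) (hM j hj) 2
    _ = S.card * M ^ 2 := by simp
  calc l2 (restr S x) ≤ Real.sqrt (S.card * M ^ 2) := Real.sqrt_le_sqrt hsum
    _ = Real.sqrt S.card * M := by rw [Real.sqrt_mul (Nat.cast_nonneg _), Real.sqrt_sq hM₀]

end restr

lemma Finset.exists_subset_card_eq_forall_le {ι α : Type*} [DecidableEq ι] [LinearOrder α]
    (f : ι → α) (U : Finset ι) {k : ℕ} (hk : k ≤ U.card) :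
    ∃ S ⊆ U, S.card = k ∧ ∀ i ∈ S, ∀ j ∈ U \ S, f j ≤ f i := by
  induction k with
  | zero => exact ⟨∅, empty_subset _, rfl, by simp⟩
  | succ k ih =>
    obtain ⟨S, hSU, hcard, htop⟩ := ih (Nat.le_of_succ_le hk)
    have hne : (U \ S).Nonempty := by
      rw [← card_pos, card_sdiff_of_subset hSU]
      omega
    obtain ⟨i₀, hi₀, hmax⟩ := exists_max_image (U \ S) f hne
    obtain ⟨hi₀U, hi₀S⟩ := mem_sdiff.mp hi₀
    refine ⟨insert i₀ S, insert_subset hi₀U hSU,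
      by rw [card_insert_of_notMem hi₀S, hcard], fun i hi j hj => ?_⟩
    obtain ⟨hjU, hjS⟩ := mem_sdiff.mp hj
    have hj' : j ∈ U \ S := mem_sdiff.mpr ⟨hjU, fun h => hjS (mem_insert_of_mem h)⟩
    rcases mem_insert.mp hi with rfl | hiS
    · exact hmax j hj'
    · exact htop i hiS j hj'

lemma exists_top_subset_spt {n : ℕ} (x : Fin n → ℂ) {k : ℕ} (hk : k ≤ (spt x).card) :
    ∃ S ⊆ spt x, S.card = k ∧ ∀ i ∈ S, ∀ j ∉ S, ‖x j‖ ≤ ‖x i‖ := by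
  obtain ⟨S, hS, hcard, htop⟩ := (spt x).exists_subset_card_eq_forall_le (‖x ·‖) hk
  refine ⟨S, hS, hcard, fun i hi j hj => ?_⟩
  by_cases hxj : x j = 0
  · simp [hxj]
  · exact htop i hi j (mem_sdiff.mpr ⟨by simpa [spt] using hxj, hj⟩)

lemma l2_restr_restr_compl_le {n s : ℕ} (hs : 0 < s) {x : Fin n → ℂ} {S : Finset (Fin n)}
    (hS : S.card = s) (htop : ∀ i ∈ S, ∀ j ∉ S, ‖x j‖ ≤ ‖x i‖)
    {T : Finset (Fin n)} (hT : T.card ≤ s) :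
    l2 (restr T (restr Sᶜ x)) ≤ l1 (restr S x) / Real.sqrt s := by
  have hs' : (0 : ℝ) < s := Nat.cast_pos.mpr hs
  have htail : ∀ j, ‖restr Sᶜ x j‖ ≤ l1 (restr S x) / s := by
    intro j
    by_cases hj : j ∈ S
    · simpa [restr, hj] using div_nonneg (l1_nonneg (restr S x)) hs'.le
    · have hsum := card_nsmul_le_sum S (‖x ·‖) ‖x j‖ fun i hi => htop i hi j hj
      rw [nsmul_eq_mul, hS] at hsum
      rw [le_div_iff₀ hs', l1_restr]
      simpa [restr, hj, mul_comm] using hsum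
  calc l2 (restr T (restr Sᶜ x)) ≤ Real.sqrt T.card * (l1 (restr S x) / s) :=
        l2_restr_le_sqrt_card_mul T _ (div_nonneg (l1_nonneg _) hs'.le) fun j _ => htail j
    _ ≤ Real.sqrt s * (l1 (restr S x) / s) := by
        gcongr
        exact div_nonneg (l1_nonneg _) hs'.le
    _ = l1 (restr S x) / Real.sqrt s := by
        field_simp
        rw [Real.sq_sqrt hs'.le, mul_comm]

theorem norm_le_of_norm_le_on_sparse {E : Type*} [SeminormedAddCommGroup E] {N s : ℕ}
    (hs : 0 < s) (T : (Fin N → ℂ) →+ E) {C : ℝ} (hC : 0 ≤ C)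
    (hT : ∀ z, (spt z).card ≤ s → ‖T z‖ ≤ C * l2 z) (x : Fin N → ℂ) {B : ℝ}
    (hB : ∀ S : Finset (Fin N), S.card ≤ s → l2 (restr S x) ≤ B) :
    ‖T x‖ ≤ C * (B + l1 x / Real.sqrt s) := by
  induction hn : (spt x).card using Nat.strong_induction_on generalizing x B with
  | _ n ih =>
  by_cases hsparse : n ≤ s
  · have hl1 : 0 ≤ l1 x / Real.sqrt s := div_nonneg (l1_nonneg x) (Real.sqrt_nonneg _)
    calc ‖T x‖ ≤ C * l2 (restr (spt x) x) := by rw [restr_spt]; exact hT x (hn ▸ hsparse)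
      _ ≤ C * B := by gcongr; exact hB _ (hn ▸ hsparse)
      _ ≤ C * (B + l1 x / Real.sqrt s) := by gcongr; linarith
  obtain ⟨S, hSx, hS, htop⟩ := exists_top_subset_spt x (k := s) (by omega)
  have hhead : ‖T (restr S x)‖ ≤ C * B := by
    refine (hT _ ?_).trans (by gcongr; exact hB S hS.le)
    rw [spt_restr, ← hS]
    exact card_le_card inter_subset_right
  have htail : ‖T (restr Sᶜ x)‖ ≤
      C * (l1 (restr S x) / Real.sqrt s + l1 (restr Sᶜ x) / Real.sqrt s) := by
    refine ih _ ?_ _ (fun U hU => l2_restr_restr_compl_le hs hS htop hU) rfl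
    rw [spt_restr, ← sdiff_eq_inter_compl, card_sdiff_of_subset hSx]
    omega
  calc ‖T x‖ = ‖T (restr S x) + T (restr Sᶜ x)‖ := by rw [← map_add, restr_add_restr_compl]
    _ ≤ ‖T (restr S x)‖ + ‖T (restr Sᶜ x)‖ := norm_add_le _ _
    _ ≤ C * B + C * (l1 (restr S x) / Real.sqrt s + l1 (restr Sᶜ x) / Real.sqrt s) :=
      add_le_add hhead htail
    _ = C * (B + l1 x / Real.sqrt s) := by rw [← l1_restr_add_l1_restr_compl S x]; ring

theorem upper_rip_all_vectors_general {m N : ℕ} (A : Matrix (Fin m) (Fin N) ℂ)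
    (s : ℕ) (hs : 1 ≤ s) (δ : ℝ)
    (hRIP : ∀ z : Fin N → ℂ, (spt z).card ≤ s →
      l2 (A.mulVec z) ≤ Real.sqrt (1 + δ) * l2 z) :
    ∀ x : Fin N → ℂ,
      l2 (A.mulVec x) ≤ Real.sqrt (1 + δ) * (l2 x + l1 x / Real.sqrt s) := by
  intro x
  let T : (Fin N → ℂ) →+ EuclideanSpace ℂ (Fin m) :=
    AddMonoidHom.mk' (fun z => WithLp.toLp 2 (A.mulVec z)) fun y z => by
      rw [Matrix.mulVec_add, WithLp.toLp_add]
  have hT : ∀ z, (spt z).card ≤ s → ‖T z‖ ≤ Real.sqrt (1 + δ) * l2 z := fun z hz => by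
    rw [← l2_eq_norm_toLp]; exact hRIP z hz
  rw [l2_eq_norm_toLp]
  exact norm_le_of_norm_le_on_sparse hs T (Real.sqrt_nonneg _) hT x fun S _ => l2_restr_le S x

/-- the upper RIP inequality for s-sparse vectors extends to all vectors:
‖Ax‖₂ ≤ √(1+δ)(‖x‖₂ + ‖x‖₁/√s). -/
theorem upper_rip_all_vectors {m N : ℕ} (A : Matrix (Fin m) (Fin N) ℂ)
    (s : ℕ) (hs : 1 ≤ s) (δ : ℝ) (hδ : 0 ≤ δ)
    (hRIP : ∀ z : Fin N → ℂ, (spt z).card ≤ s →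
      l2 (A.mulVec z) ≤ Real.sqrt (1 + δ) * l2 z) :
    ∀ x : Fin N → ℂ,
      l2 (A.mulVec x) ≤ Real.sqrt (1 + δ) * (l2 x + l1 x / Real.sqrt s) :=
  upper_rip_all_vectors_general A s hs δ hRIP
end

section
/- Let y = Ax + e with x ∈ C^N arbitrary, let x^s be a best (ω,s)-sparse approximation to x with support S, and suppose A has ω-RIP constant δ_{ω,3s} < 1/√32. Then the IHWT iterates x^n (with x^0 = 0) satisfy ‖x − x^n‖₂ ≤ 2^{−n} ‖x^s‖₂ + ‖x − x^s‖₂ + 4.34 ‖A x_{S̄} + e‖₂, where x_{S̄} = x − x^s. -/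
/-!
Write `u = xⁿ⁺¹ - xˢ`, `v = xⁿ - xˢ` and `r = A(x - xˢ) + e`, so that `y = A xˢ + r`. Both `u` and `v`
live on a support of weighted size at most `3s`, where `A` is a `δ`-near isometry. Since `xⁿ⁺¹` is at
least as close as `xˢ` to the gradient step `b = xⁿ + A*(y - A xⁿ)`, we get `‖u‖² ≤ 2 re⟪b - xˢ, u⟫`,
and `b - xˢ = (I - A*A) v + A* r`. Polarization turns the RIP into
`re⟪v, u⟫ - re⟪Av, Au⟫ ≤ δ ‖v‖ ‖u‖`, hence `‖u‖ ≤ 2δ ‖v‖ + 2√(1+δ) ‖r‖ ≤ ‖v‖/2 + 2.17 ‖r‖` once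
`δ < 1/√32`. Iterating from `x⁰ = 0` and applying the triangle inequality through `xˢ` gives the bound.
-/

open Finset

section RestrictedIsometry

open RCLike
open scoped InnerProductSpace

variable {𝕜 E F : Type*} [RCLike 𝕜] [NormedAddCommGroup E] [InnerProductSpace 𝕜 E]
  [NormedAddCommGroup F] [InnerProductSpace 𝕜 F]

theorem norm_sq_le_two_mul_re_inner_of_norm_sub_le {w u : E} (h : ‖w - u‖ ≤ ‖w‖) :
    ‖u‖ ^ 2 ≤ 2 * re ⟪w, u⟫_𝕜 := by
  have hsq := pow_le_pow_left₀ (norm_nonneg _) h 2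
  rw [norm_sub_sq (𝕜 := 𝕜)] at hsq
  linarith

noncomputable def gradientStep [FiniteDimensional 𝕜 E] [FiniteDimensional 𝕜 F] (L : E →ₗ[𝕜] F)
    (y : F) (a : E) : E :=
  a + L.adjoint (y - L a)

def RestrictedIsometryOn (L : E →ₗ[𝕜] F) (V : Submodule 𝕜 E) (δ : ℝ) : Prop :=
  ∀ z ∈ V, (1 - δ) * ‖z‖ ^ 2 ≤ ‖L z‖ ^ 2 ∧ ‖L z‖ ^ 2 ≤ (1 + δ) * ‖z‖ ^ 2

namespace RestrictedIsometryOn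

variable {L : E →ₗ[𝕜] F} {V : Submodule 𝕜 E} {δ : ℝ}

theorem mul_norm_nonneg (hL : RestrictedIsometryOn L V δ) {z : E} (hz : z ∈ V) :
    0 ≤ δ * ‖z‖ := by
  obtain ⟨hlow, hup⟩ := hL z hz
  rcases (norm_nonneg z).eq_or_lt with h0 | hpos
  · simp [← h0]
  · nlinarith

theorem norm_apply_le (hL : RestrictedIsometryOn L V δ) {z : E} (hz : z ∈ V) :
    ‖L z‖ ≤ √(1 + δ) * ‖z‖ :=
  calc ‖L z‖ = √(‖L z‖ ^ 2) := (Real.sqrt_sq (norm_nonneg _)).symm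
    _ ≤ √((1 + δ) * ‖z‖ ^ 2) := Real.sqrt_le_sqrt (hL z hz).2
    _ = √(1 + δ) * ‖z‖ := by rw [Real.sqrt_mul' _ (sq_nonneg _), Real.sqrt_sq (norm_nonneg _)]

theorem re_inner_sub_re_inner_le_half (hL : RestrictedIsometryOn L V δ) {p q : E}
    (hp : p ∈ V) (hq : q ∈ V) :
    re ⟪p, q⟫_𝕜 - re ⟪L p, L q⟫_𝕜 ≤ δ / 2 * (‖p‖ ^ 2 + ‖q‖ ^ 2) := by
  have hadd := (hL _ (V.add_mem hp hq)).1
  have hsub := (hL _ (V.sub_mem hp hq)).2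
  rw [map_add, norm_add_sq (𝕜 := 𝕜), norm_add_sq (𝕜 := 𝕜)] at hadd
  rw [map_sub, norm_sub_sq (𝕜 := 𝕜), norm_sub_sq (𝕜 := 𝕜)] at hsub
  linarith

theorem re_inner_sub_re_inner_le (hL : RestrictedIsometryOn L V δ) {p q : E}
    (hp : p ∈ V) (hq : q ∈ V) :
    re ⟪p, q⟫_𝕜 - re ⟪L p, L q⟫_𝕜 ≤ δ * ‖p‖ * ‖q‖ := by
  rcases eq_or_ne p 0 with rfl | hp0
  · simp
  rcases eq_or_ne q 0 with rfl | hq0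
  · simp
  have hpn : 0 < ‖p‖ := norm_pos_iff.2 hp0
  have hqn : 0 < ‖q‖ := norm_pos_iff.2 hq0
  have hunit := hL.re_inner_sub_re_inner_le_half
    (V.smul_mem ((‖p‖⁻¹ : ℝ) : 𝕜) hp) (V.smul_mem ((‖q‖⁻¹ : ℝ) : 𝕜) hq)
  simp only [map_smul, inner_smul_real_left, inner_smul_real_right, smul_re, norm_smul,
    norm_ofReal, abs_inv, abs_norm, inv_mul_cancel₀ hpn.ne', inv_mul_cancel₀ hqn.ne'] at hunit
  calc re ⟪p, q⟫_𝕜 - re ⟪L p, L q⟫_𝕜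
      = ‖p‖ * ‖q‖ * (‖q‖⁻¹ * (‖p‖⁻¹ * re ⟪p, q⟫_𝕜) - ‖q‖⁻¹ * (‖p‖⁻¹ * re ⟪L p, L q⟫_𝕜)) := by
        field_simp
    _ ≤ ‖p‖ * ‖q‖ * (δ / 2 * (1 ^ 2 + 1 ^ 2)) := by gcongr
    _ = δ * ‖p‖ * ‖q‖ := by ring

variable [FiniteDimensional 𝕜 E] [FiniteDimensional 𝕜 F]

theorem norm_sub_le_of_norm_gradientStep_sub_le (hL : RestrictedIsometryOn L V δ) {a a' z : E}
    (r : F) (ha : a - z ∈ V) (ha' : a' - z ∈ V)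
    (hbest : ‖gradientStep L (L z + r) a - a'‖ ≤ ‖gradientStep L (L z + r) a - z‖) :
    ‖a' - z‖ ≤ 2 * δ * ‖a - z‖ + 2 * √(1 + δ) * ‖r‖ := by
  have hsplit : gradientStep L (L z + r) a - z = a - z - L.adjoint (L (a - z)) + L.adjoint r := by
    simp only [gradientStep, map_sub, map_add]
    abel
  have hsq : ‖a' - z‖ ^ 2 ≤ 2 * re ⟪gradientStep L (L z + r) a - z, a' - z⟫_𝕜 :=
    norm_sq_le_two_mul_re_inner_of_norm_sub_le (by rwa [sub_sub_sub_cancel_right])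
  have hnoise : re ⟪r, L (a' - z)⟫_𝕜 ≤ ‖r‖ * (√(1 + δ) * ‖a' - z‖) :=
    (re_inner_le_norm r _).trans (mul_le_mul_of_nonneg_left (hL.norm_apply_le ha') (norm_nonneg r))
  have hinner : re ⟪gradientStep L (L z + r) a - z, a' - z⟫_𝕜
      ≤ δ * ‖a - z‖ * ‖a' - z‖ + ‖r‖ * (√(1 + δ) * ‖a' - z‖) := by
    rw [hsplit, inner_add_left, inner_sub_left, LinearMap.adjoint_inner_left,
      LinearMap.adjoint_inner_left, map_add, map_sub]
    linarith [hL.re_inner_sub_re_inner_le ha ha']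
  have hbound_nonneg : 0 ≤ 2 * δ * ‖a - z‖ + 2 * √(1 + δ) * ‖r‖ := by
    have := hL.mul_norm_nonneg ha
    have : 0 ≤ √(1 + δ) * ‖r‖ := by positivity
    linarith
  nlinarith [norm_nonneg (a' - z)]

end RestrictedIsometryOn

end RestrictedIsometry

theorem le_half_pow_mul_add_two_mul {a : ℕ → ℝ} {c : ℝ} (hc : 0 ≤ c)
    (h : ∀ n, a (n + 1) ≤ a n / 2 + c) (n : ℕ) : a n ≤ (1 / 2) ^ n * a 0 + 2 * c := by
  induction n with
  | zero => simp [hc]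
  | succ n ih =>
    calc a (n + 1) ≤ a n / 2 + c := h n
      _ ≤ ((1 / 2) ^ n * a 0 + 2 * c) / 2 + c := by gcongr
      _ = (1 / 2) ^ (n + 1) * a 0 + 2 * c := by ring

theorem ihwt_constants {δ : ℝ} (hδ : δ < 1 / √32) : 2 * δ ≤ 1 / 2 ∧ 2 * √(1 + δ) ≤ 2.17 := by
  have hsqrt : (5.65 : ℝ) < √32 := (Real.lt_sqrt (by norm_num)).2 (by norm_num)
  have hδ' : δ < 0.177 :=
    hδ.trans ((one_div_lt_one_div_of_lt (by norm_num) hsqrt).trans (by norm_num))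
  refine ⟨by linarith, ?_⟩
  have : √(1 + δ) ≤ 1.085 := (Real.sqrt_le_left (by norm_num)).2 (by nlinarith)
  linarith

section SparseVectors

open Matrix

def supportedOn {𝕜 ι : Type*} [RCLike 𝕜] (T : Finset ι) : Submodule 𝕜 (EuclideanSpace 𝕜 ι) where
  carrier := {z | ∀ j ∉ T, z j = 0}
  add_mem' hz hw j hj := by simp [hz j hj, hw j hj]
  zero_mem' _ _ := rfl
  smul_mem' c z hz j hj := by simp [hz j hj]

variable {n : ℕ}

theorem l2_eq_norm (z : Fin n → ℂ) : l2 z = ‖(WithLp.toLp 2 z : EuclideanSpace ℂ (Fin n))‖ := by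
  rw [EuclideanSpace.norm_eq]
  rfl

theorem l2_nonneg (z : Fin n → ℂ) : 0 ≤ l2 z :=
  Real.sqrt_nonneg _

theorem l2_sub_le (a b c : Fin n → ℂ) : l2 (a - c) ≤ l2 (a - b) + l2 (c - b) := by
  simp only [l2_eq_norm, WithLp.toLp_sub]
  rw [norm_sub_rev (WithLp.toLp 2 c)]
  exact norm_sub_le_norm_sub_add_norm_sub _ _ _

theorem l2_neg (z : Fin n → ℂ) : l2 (-z) = l2 z := by
  simp only [l2_eq_norm, WithLp.toLp_neg, norm_neg]

theorem wnorm0_nonneg (ω : Fin n → ℝ) (z : Fin n → ℂ) : 0 ≤ wnorm0 ω z :=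
  sum_nonneg fun j _ => sq_nonneg (ω j)

theorem wnorm0_le_wcard (ω : Fin n → ℝ) {z : Fin n → ℂ} {T : Finset (Fin n)} (h : spt z ⊆ T) :
    wnorm0 ω z ≤ wcard ω T :=
  sum_le_sum_of_subset_of_nonneg h fun j _ _ => sq_nonneg (ω j)

theorem wcard_union_le (ω : Fin n → ℝ) (S T : Finset (Fin n)) :
    wcard ω (S ∪ T) ≤ wcard ω S + wcard ω T := by
  have hinter : 0 ≤ wcard ω (S ∩ T) := sum_nonneg fun j _ => sq_nonneg (ω j)
  have := sum_union_inter (s₁ := S) (s₂ := T) (f := fun j => ω j ^ 2)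
  unfold wcard at *
  linarith

theorem spt_subset_of_mem_supportedOn {T : Finset (Fin n)} {z : EuclideanSpace ℂ (Fin n)}
    (hz : z ∈ supportedOn T) : spt z.ofLp ⊆ T :=
  fun j hj => by_contra fun hjT => (mem_filter.1 hj).2 (hz j hjT)

theorem toLp_sub_mem_supportedOn {T : Finset (Fin n)} {a b : Fin n → ℂ} (ha : spt a ⊆ T)
    (hb : spt b ⊆ T) : WithLp.toLp 2 (a - b) ∈ supportedOn T := by
  have hzero : ∀ c : Fin n → ℂ, spt c ⊆ T → ∀ j ∉ T, c j = 0 :=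
    fun c hc j hj => by_contra fun h => hj (hc (by simp [spt, h]))
  intro j hj
  simp [hzero a ha j hj, hzero b hb j hj]

theorem restrictedIsometryOn_supportedOn {m : ℕ} {A : Matrix (Fin m) (Fin n) ℂ} {ω : Fin n → ℝ}
    {t δ : ℝ} (hRIP : ∀ z : Fin n → ℂ, wnorm0 ω z ≤ t →
      (1 - δ) * l2 z ^ 2 ≤ l2 (A *ᵥ z) ^ 2 ∧ l2 (A *ᵥ z) ^ 2 ≤ (1 + δ) * l2 z ^ 2)
    {T : Finset (Fin n)} (hT : wcard ω T ≤ t) :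
    RestrictedIsometryOn (toEuclideanLin A) (supportedOn T) δ := fun z hz => by
  have h := hRIP z.ofLp ((wnorm0_le_wcard ω (spt_subset_of_mem_supportedOn hz)).trans hT)
  simp only [l2_eq_norm, WithLp.toLp_ofLp] at h
  exact h

theorem l2_sub_le_of_ihwt_step {m : ℕ} {A : Matrix (Fin m) (Fin n) ℂ} {ω : Fin n → ℝ} {s δ : ℝ}
    (hRIP : ∀ z : Fin n → ℂ, wnorm0 ω z ≤ 3 * s →
      (1 - δ) * l2 z ^ 2 ≤ l2 (A *ᵥ z) ^ 2 ∧ l2 (A *ᵥ z) ^ 2 ≤ (1 + δ) * l2 z ^ 2)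
    {a a' z : Fin n → ℂ} (ha : wnorm0 ω a ≤ s) (ha' : wnorm0 ω a' ≤ s) (hz : wnorm0 ω z ≤ s)
    (r : Fin m → ℂ)
    (hbest : l2 (a + Aᴴ *ᵥ (A *ᵥ z + r - A *ᵥ a) - a') ≤ l2 (a + Aᴴ *ᵥ (A *ᵥ z + r - A *ᵥ a) - z)) :
    l2 (a' - z) ≤ 2 * δ * l2 (a - z) + 2 * √(1 + δ) * l2 r := by
  have hT : wcard ω (spt a ∪ spt a' ∪ spt z) ≤ 3 * s := by
    have ha : wcard ω (spt a) ≤ s := ha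
    have ha' : wcard ω (spt a') ≤ s := ha'
    have hz : wcard ω (spt z) ≤ s := hz
    linarith [wcard_union_le ω (spt a ∪ spt a') (spt z), wcard_union_le ω (spt a) (spt a')]
  set T := spt a ∪ spt a' ∪ spt z
  have haT : spt a ⊆ T := subset_union_left.trans subset_union_left
  have ha'T : spt a' ⊆ T := subset_union_right.trans subset_union_left
  have hzT : spt z ⊆ T := subset_union_right
  simp only [l2_eq_norm] at hbest ⊢
  refine (restrictedIsometryOn_supportedOn hRIP hT).norm_sub_le_of_norm_gradientStep_sub_le
    (WithLp.toLp 2 r) (toLp_sub_mem_supportedOn haT hzT) (toLp_sub_mem_supportedOn ha'T hzT) ?_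
  rwa [gradientStep, ← Matrix.toEuclideanLin_conjTranspose_eq_adjoint]

end SparseVectors

theorem ihwt_convergence_general {m N : ℕ} (A : Matrix (Fin m) (Fin N) ℂ)
    (ω : Fin N → ℝ) (s : ℝ)
    (x : Fin N → ℂ) (e y : Fin m → ℂ) (hy : y = fun i => A.mulVec x i + e i)
    (xs : Fin N → ℂ) (hxs_sparse : wnorm0 ω xs ≤ s)
    (δ : ℝ) (hδ : δ < 1 / Real.sqrt 32)
    (hRIP : ∀ z : Fin N → ℂ, wnorm0 ω z ≤ 3 * s →
      (1 - δ) * l2 z ^ 2 ≤ l2 (A.mulVec z) ^ 2 ∧ l2 (A.mulVec z) ^ 2 ≤ (1 + δ) * l2 z ^ 2)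
    (X : ℕ → Fin N → ℂ) (hX0 : X 0 = 0)
    (hX : ∀ n, wnorm0 ω (X (n + 1)) ≤ s ∧
      ∀ z : Fin N → ℂ, wnorm0 ω z ≤ s →
        l2 (fun j => (X n j + A.conjTranspose.mulVec (fun i => y i - A.mulVec (X n) i) j) - X (n + 1) j) ≤
        l2 (fun j => (X n j + A.conjTranspose.mulVec (fun i => y i - A.mulVec (X n) i) j) - z j)) :
    ∀ n : ℕ,
      l2 (fun j => x j - X n j) ≤
        (1 / 2 : ℝ) ^ n * l2 xs + l2 (fun j => x j - xs j) +
          4.34 * l2 (fun i => A.mulVec (fun j => x j - xs j) i + e i) := by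
  obtain ⟨hcontract, hamplify⟩ := ihwt_constants hδ
  have hsparse : ∀ n, wnorm0 ω (X n) ≤ s
    | 0 => by simpa [hX0, wnorm0, spt] using (wnorm0_nonneg ω xs).trans hxs_sparse
    | n + 1 => (hX n).1
  set r : Fin m → ℂ := fun i => A.mulVec (fun j => x j - xs j) i + e i
  have hsplit : A.mulVec x = A.mulVec xs + A.mulVec (fun j => x j - xs j) := by
    rw [← Matrix.mulVec_add]
    congr 1
    ext j
    simp
  have hresidual : ∀ n, (fun i => y i - A.mulVec (X n) i) = A.mulVec xs + r - A.mulVec (X n) := by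
    intro n
    ext i
    simp only [hy, hsplit, r, Pi.add_apply, Pi.sub_apply]
    ring
  have hstep : ∀ n, l2 (X (n + 1) - xs) ≤ l2 (X n - xs) / 2 + 2.17 * l2 r := by
    intro n
    have hbest := (hX n).2 xs hxs_sparse
    rw [hresidual] at hbest
    have := l2_sub_le_of_ihwt_step hRIP (hsparse n) (hsparse (n + 1)) hxs_sparse r hbest
    linarith [mul_le_mul_of_nonneg_right hcontract (l2_nonneg (X n - xs)),
      mul_le_mul_of_nonneg_right hamplify (l2_nonneg r)]
  intro n
  calc l2 (x - X n) ≤ l2 (x - xs) + l2 (X n - xs) := l2_sub_le x xs (X n)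
    _ ≤ l2 (x - xs) + ((1 / 2) ^ n * l2 (X 0 - xs) + 2 * (2.17 * l2 r)) := by
      gcongr
      have hr : 0 ≤ 2.17 * l2 r := mul_nonneg (by norm_num) (l2_nonneg r)
      exact le_half_pow_mul_add_two_mul (a := fun k => l2 (X k - xs)) hr hstep n
    _ = (1 / 2 : ℝ) ^ n * l2 xs + l2 (x - xs) + 4.34 * l2 r := by
      rw [hX0, zero_sub, l2_neg]
      ring

/-- IHWT convergence to a neighborhood: if δ_{ω,3s} < 1/√32 then the
IHWT iterates satisfy ‖x − x^n‖₂ ≤ 2^{−n}‖x^s‖₂ + ‖x − x^s‖₂ + 4.34‖A x_{S̄} + e‖₂. -/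
theorem ihwt_convergence {m N : ℕ} (A : Matrix (Fin m) (Fin N) ℂ)
    (ω : Fin N → ℝ) (hω : ∀ j, 1 ≤ ω j) (s : ℝ)
    (x : Fin N → ℂ) (e y : Fin m → ℂ) (hy : y = fun i => A.mulVec x i + e i)
    (xs : Fin N → ℂ) (hxs_sparse : wnorm0 ω xs ≤ s)
    (hxs_best : ∀ z : Fin N → ℂ, wnorm0 ω z ≤ s →
      l2 (fun j => x j - xs j) ≤ l2 (fun j => x j - z j))
    (δ : ℝ) (hδ : δ < 1 / Real.sqrt 32)
    (hRIP : ∀ z : Fin N → ℂ, wnorm0 ω z ≤ 3 * s →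
      (1 - δ) * l2 z ^ 2 ≤ l2 (A.mulVec z) ^ 2 ∧ l2 (A.mulVec z) ^ 2 ≤ (1 + δ) * l2 z ^ 2)
    (X : ℕ → Fin N → ℂ) (hX0 : X 0 = 0)
    (hX : ∀ n, wnorm0 ω (X (n + 1)) ≤ s ∧
      ∀ z : Fin N → ℂ, wnorm0 ω z ≤ s →
        l2 (fun j => (X n j + A.conjTranspose.mulVec (fun i => y i - A.mulVec (X n) i) j) - X (n + 1) j) ≤
        l2 (fun j => (X n j + A.conjTranspose.mulVec (fun i => y i - A.mulVec (X n) i) j) - z j)) :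
    ∀ n : ℕ,
      l2 (fun j => x j - X n j) ≤
        (1 / 2 : ℝ) ^ n * l2 xs + l2 (fun j => x j - xs j) +
          4.34 * l2 (fun i => A.mulVec (fun j => x j - xs j) i + e i) :=
  ihwt_convergence_general A ω s x e y hy xs hxs_sparse δ hδ hRIP X hX0 hX
end
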